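/- Let 1 ≤ k ≤ n and A ∈ ℂ^{n×n}. Suppose λ_k(p₁,p₂) = λ_{n−k+1}(p₁,p₂) for some (p₁,p₂) ∈ ℝ² \ {(0,0)}. Then: (i) Λ_k(A) ⊆ {a + ib ∈ ℂ : a·p₁ + b·p₂ = λ_k(p₁,p₂)}; and (ii) if k < (n+1)/2, then the point p = (−λ_k(p₁,p₂), p₁, p₂) satisfies f_A(p) = 0 and ∇f_A(p) = (0,0,0). -/

import Mathlib

/-!
Write `S = p₁ Re A + p₂ Im A`. Since `λ_k` is positively homogeneous, the halfplane inequalities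
defining `Λ_k(A)` hold in every direction of `ℝ²`, not only in unit ones, and
`λ_k(-S) = -λ_{n-k+1}(S)`. Applied to `p` and `-p`, the hypothesis `λ_k(p) = λ_{n-k+1}(p)` turns
the two inequalities into an equality.

When `2k < n + 1` the indices `k` and `n - k + 1` differ, so `μ = λ_k(S)` is an eigenvalue of `S` of
multiplicity at least two, and the pencil `S - μ` at `p` kills two orthonormal eigenvectors. The
determinant of the pencil, hence `f_A`, then vanishes to second order along every line through `p`,
which gives `f_A(p) = 0` and `∇f_A(p) = 0`.
-/

open Matrix

noncomputable section

/-- The Hermitian real part `(A + Aᴴ)/2` of a complex matrix. -/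
def ReM {n : ℕ} (A : Matrix (Fin n) (Fin n) ℂ) : Matrix (Fin n) (Fin n) ℂ :=
  (2⁻¹ : ℂ) • (A + Aᴴ)

/-- The Hermitian imaginary part `(A - Aᴴ)/(2i)` of a complex matrix. -/
def ImM {n : ℕ} (A : Matrix (Fin n) (Fin n) ℂ) : Matrix (Fin n) (Fin n) ℂ :=
  ((2 * Complex.I)⁻¹ : ℂ) • (A - Aᴴ)

/-- The `k`-th largest eigenvalue (for `1 ≤ k ≤ n`) of a Hermitian `n × n` matrix
(with junk value `0` for non-Hermitian input): the eigenvalues sorted in increasing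
order, evaluated at index `n - k`. -/
def kthEig {n : ℕ} (M : Matrix (Fin n) (Fin n) ℂ) (k : ℕ) : ℝ :=
  if hM : M.IsHermitian then
    if h : n - k < n then (hM.eigenvalues ∘ Tuple.sort hM.eigenvalues) ⟨n - k, h⟩ else 0
  else 0

/-- `λ_k(x,y) = λ_k(x·Re A + y·Im A)`. -/
def lamXY {n : ℕ} (A : Matrix (Fin n) (Fin n) ℂ) (k : ℕ) (x y : ℝ) : ℝ :=
  kthEig ((x : ℂ) • ReM A + (y : ℂ) • ImM A) k

/-- `λ_k(θ) = λ_k(cos θ · Re A + sin θ · Im A)`. -/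
def lamTheta {n : ℕ} (A : Matrix (Fin n) (Fin n) ℂ) (k : ℕ) (θ : ℝ) : ℝ :=
  lamXY A k (Real.cos θ) (Real.sin θ)

/-- The rank-`k` numerical range, via the Li–Sze halfplane description:
`Λ_k(A) = {a + ib : a cos θ + b sin θ ≤ λ_k(θ) for all θ}`. -/
def NumRange {n : ℕ} (A : Matrix (Fin n) (Fin n) ℂ) (k : ℕ) : Set ℂ :=
  {z : ℂ | ∀ θ : ℝ, z.re * Real.cos θ + z.im * Real.sin θ ≤ lamTheta A k θ}

/-- The matrix pencil `v₀·I + v₁·Re A + v₂·Im A`. -/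
def pencil {n : ℕ} (A : Matrix (Fin n) (Fin n) ℂ) (v : Fin 3 → ℝ) :
    Matrix (Fin n) (Fin n) ℂ :=
  (v 0 : ℂ) • (1 : Matrix (Fin n) (Fin n) ℂ) + (v 1 : ℂ) • ReM A + (v 2 : ℂ) • ImM A

namespace MvPolynomial

open Polynomial (derivative)

variable {R σ : Type*} [CommRing R] [DecidableEq σ]

def lineRestrict (f : MvPolynomial σ R) (v : σ → R) (i : σ) : Polynomial R :=
  aeval (Function.update (fun j => Polynomial.C (v j)) i Polynomial.X) f

lemma eval_lineRestrict (f : MvPolynomial σ R) (v : σ → R) (i : σ) (s : R) :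
    (f.lineRestrict v i).eval s = eval (Function.update v i s) f := by
  induction f using MvPolynomial.induction_on with
  | C a => simp [lineRestrict]
  | add f g hf hg => simp_all [lineRestrict]
  | mul_X f j hf =>
    rcases eq_or_ne j i with rfl | h <;> simp_all [lineRestrict]

lemma derivative_lineRestrict (f : MvPolynomial σ R) (v : σ → R) (i : σ) :
    derivative (f.lineRestrict v i) = (pderiv i f).lineRestrict v i := by
  induction f using MvPolynomial.induction_on with
  | C a => simp [lineRestrict]
  | add f g hf hg => simp_all [lineRestrict]
  | mul_X f j hf =>
    rcases eq_or_ne j i with rfl | h <;> simp_all [lineRestrict, Polynomial.derivative_mul] <;> ring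

lemma eval_eq_zero_and_eval_pderiv_eq_zero {f : MvPolynomial σ R} {v : σ → R} {i : σ}
    (h : (Polynomial.X - Polynomial.C (v i)) ^ 2 ∣ f.lineRestrict v i) :
    eval v f = 0 ∧ eval v (pderiv i f) = 0 := by
  have hroot := Polynomial.dvd_iff_isRoot.mp ((dvd_pow_self _ two_ne_zero).trans h)
  have hroot' := Polynomial.dvd_iff_isRoot.mp
    (by simpa using Polynomial.pow_sub_one_dvd_derivative_of_pow_dvd h)
  rw [Polynomial.IsRoot, eval_lineRestrict, Function.update_eq_self] at hroot
  rw [Polynomial.IsRoot, derivative_lineRestrict, eval_lineRestrict,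
    Function.update_eq_self] at hroot'
  exact ⟨hroot, hroot'⟩

end MvPolynomial

namespace Matrix

variable {m R : Type*} [Fintype m] [DecidableEq m] [CommRing R]

lemma sq_dvd_det_of_dvd_col {M : Matrix m m R} {a : R} {j₁ j₂ : m} (hj : j₁ ≠ j₂)
    (h₁ : ∀ i, a ∣ M i j₁) (h₂ : ∀ i, a ∣ M i j₂) : a ^ 2 ∣ M.det := by
  rw [det_apply']
  refine Finset.dvd_sum fun σ _ => Dvd.dvd.mul_left ?_ _
  rw [← Finset.mul_prod_erase _ _ (Finset.mem_univ j₁),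
    ← Finset.mul_prod_erase _ _ (Finset.mem_erase.mpr ⟨hj.symm, Finset.mem_univ j₂⟩),
    ← mul_assoc, sq]
  exact (mul_dvd_mul (h₁ _) (h₂ _)).mul_right _

/-- If `N` kills two independent vectors, `N + t • B` vanishes to second order in `t`. -/
lemma sq_dvd_det_add_smul {N V : Matrix m m R} (hV : IsUnit V.det) {j₁ j₂ : m} (hj : j₁ ≠ j₂)
    (h₁ : ∀ i, (N * V) i j₁ = 0) (h₂ : ∀ i, (N * V) i j₂ = 0) (B : Matrix m m R) (t : R) :
    t ^ 2 ∣ (N + t • B).det := by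
  rw [← hV.dvd_mul_right, ← det_mul]
  apply sq_dvd_det_of_dvd_col hj <;> intro i <;> simp [add_mul, h₁ i, h₂ i]

end Matrix

lemma Tuple.eq_comp_sort_of_perm {α : Type*} [LinearOrder α] {n : ℕ} {f g : Fin n → α}
    (hg : Monotone g) (h : (List.ofFn g).Perm (List.ofFn f)) : g = f ∘ Tuple.sort f :=
  List.ofFn_injective <| List.Perm.eq_of_sortedLE hg.sortedLE_ofFn
    (Tuple.monotone_sort f).sortedLE_ofFn (h.trans ((Tuple.sort f).ofFn_comp_perm f).symm)

namespace Matrix.IsHermitian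

variable {𝕜 : Type*} [RCLike 𝕜]

section

variable {m : Type*} [Fintype m] [DecidableEq m] {A B : Matrix m m 𝕜}

lemma mul_eigenvectorUnitary_apply (hA : A.IsHermitian) (i j : m) :
    (A * (hA.eigenvectorUnitary : Matrix m m 𝕜)) i j
      = hA.eigenvalues j * (hA.eigenvectorUnitary : Matrix m m 𝕜) i j := by
  have h := congrFun (hA.mulVec_eigenvectorBasis j) i
  rw [Pi.smul_apply, RCLike.real_smul_eq_coe_mul] at h
  exact h

lemma map_eigenvalues_cfc (hA : A.IsHermitian) (hB : B.IsHermitian) {f : ℝ → ℝ}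
    (hBA : cfc f A = B) :
    Finset.univ.val.map hB.eigenvalues = Finset.univ.val.map (f ∘ hA.eigenvalues) := by
  have hc : B.charpoly = _ := hBA ▸ hA.charpoly_cfc_eq f
  have h := hB.roots_charpoly_eq_eigenvalues
  rw [hc, Polynomial.roots_prod _ _ (by
    simp [Finset.prod_ne_zero_iff, Polynomial.X_sub_C_ne_zero])] at h
  apply Multiset.map_injective (RCLike.ofReal_injective (K := 𝕜))
  simpa [Multiset.map_map, Function.comp_def] using h.symm

end

variable {n : ℕ} {A B : Matrix (Fin n) (Fin n) 𝕜}

def sortedEigenvalues (hA : A.IsHermitian) : Fin n → ℝ :=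
  hA.eigenvalues ∘ Tuple.sort hA.eigenvalues

lemma monotone_sortedEigenvalues (hA : A.IsHermitian) : Monotone hA.sortedEigenvalues :=
  Tuple.monotone_sort _

lemma ofFn_eigenvalues_cfc_perm (hA : A.IsHermitian) (hB : B.IsHermitian) {f : ℝ → ℝ}
    (hBA : cfc f A = B) :
    (List.ofFn (f ∘ hA.sortedEigenvalues)).Perm (List.ofFn hB.eigenvalues) := by
  have h := map_eigenvalues_cfc hA hB hBA
  rw [Fin.univ_val_map, Fin.univ_val_map, Multiset.coe_eq_coe] at h
  exact ((Tuple.sort hA.eigenvalues).ofFn_comp_perm (f ∘ hA.eigenvalues)).trans h.symm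

lemma sortedEigenvalues_cfc_of_monotone (hA : A.IsHermitian) (hB : B.IsHermitian) {f : ℝ → ℝ}
    (hf : Monotone f) (hBA : cfc f A = B) :
    hB.sortedEigenvalues = f ∘ hA.sortedEigenvalues :=
  (Tuple.eq_comp_sort_of_perm (hf.comp hA.monotone_sortedEigenvalues)
    (ofFn_eigenvalues_cfc_perm hA hB hBA)).symm

lemma sortedEigenvalues_cfc_of_antitone (hA : A.IsHermitian) (hB : B.IsHermitian) {f : ℝ → ℝ}
    (hf : Antitone f) (hBA : cfc f A = B) :
    hB.sortedEigenvalues = f ∘ hA.sortedEigenvalues ∘ Fin.rev := by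
  refine (Tuple.eq_comp_sort_of_perm ?_ ?_).symm
  · exact hf.comp (hA.monotone_sortedEigenvalues.comp_antitone Fin.rev_anti)
  · exact (Fin.revPerm.ofFn_comp_perm (f ∘ hA.sortedEigenvalues)).trans
      (ofFn_eigenvalues_cfc_perm hA hB hBA)

end Matrix.IsHermitian

section kthEig

variable {n : ℕ} {M S : Matrix (Fin n) (Fin n) ℂ}

lemma kthEig_of_lt (hM : M.IsHermitian) {k : ℕ} (h : n - k < n) :
    kthEig M k = hM.sortedEigenvalues ⟨n - k, h⟩ := by
  rw [kthEig, dif_pos hM, dif_pos h]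
  rfl

lemma kthEig_of_not_lt {k : ℕ} (h : ¬n - k < n) : kthEig M k = 0 := by
  unfold kthEig
  split_ifs <;> rfl

lemma kthEig_real_smul (hS : S.IsHermitian) {c : ℝ} (hc : 0 ≤ c) (k : ℕ) :
    kthEig ((c : ℂ) • S) k = c * kthEig S k := by
  have hcS : cfc (c * ·) S = (c : ℂ) • S := by
    rw [cfc_const_mul_id c S hS.isSelfAdjoint, Complex.coe_smul]
  have hM : ((c : ℂ) • S).IsHermitian := hcS ▸ IsSelfAdjoint.isHermitian (cfc_predicate _ S)
  by_cases h : n - k < n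
  · rw [kthEig_of_lt hM h, kthEig_of_lt hS h,
      hS.sortedEigenvalues_cfc_of_monotone hM (monotone_mul_left_of_nonneg hc) hcS]
    rfl
  · rw [kthEig_of_not_lt h, kthEig_of_not_lt h, mul_zero]

lemma kthEig_neg (hS : S.IsHermitian) {k : ℕ} (hk1 : 1 ≤ k) (hkn : k ≤ n) :
    kthEig (-S) k = -kthEig S (n - k + 1) := by
  rw [kthEig_of_lt hS.neg (by omega), kthEig_of_lt hS (by omega),
    hS.sortedEigenvalues_cfc_of_antitone hS.neg (fun _ _ => neg_le_neg)
      (cfc_neg_id S hS.isSelfAdjoint)]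
  simp only [Function.comp_apply]
  congr 2

lemma exists_ne_eigenvalues_eq_kthEig (hS : S.IsHermitian) {k l : ℕ} (hk1 : 1 ≤ k)
    (hkn : k ≤ n) (hl1 : 1 ≤ l) (hln : l ≤ n) (hkl : k ≠ l) (h : kthEig S k = kthEig S l) :
    ∃ j₁ j₂, j₁ ≠ j₂ ∧ hS.eigenvalues j₁ = kthEig S k ∧ hS.eigenvalues j₂ = kthEig S k := by
  refine ⟨Tuple.sort hS.eigenvalues ⟨n - k, by omega⟩,
    Tuple.sort hS.eigenvalues ⟨n - l, by omega⟩, ?_, ?_, ?_⟩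
  · rw [Ne, (Tuple.sort _).injective.eq_iff, Fin.mk.injEq]
    omega
  · rw [kthEig_of_lt hS]
    rfl
  · rw [h, kthEig_of_lt hS]
    rfl

end kthEig

section Pencil

variable {n : ℕ} (A : Matrix (Fin n) (Fin n) ℂ)

lemma ReM_eq_realPart : ReM A = realPart A := by
  rw [ReM, realPart_apply_coe, star_eq_conjTranspose, ← Complex.coe_smul]
  push_cast
  rfl

lemma ImM_eq_imaginaryPart : ImM A = imaginaryPart A := by
  rw [ImM, imaginaryPart_apply_coe, ← Complex.coe_smul, smul_smul]
  congr 1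
  rw [mul_inv, Complex.inv_I]
  push_cast
  ring

lemma isHermitian_smul_ReM_add_smul_ImM (x y : ℝ) :
    ((x : ℂ) • ReM A + (y : ℂ) • ImM A).IsHermitian := by
  rw [ReM_eq_realPart, ImM_eq_imaginaryPart, Complex.coe_smul, Complex.coe_smul]
  exact (((IsSelfAdjoint.all x).smul (realPart A).2).add
    ((IsSelfAdjoint.all y).smul (imaginaryPart A).2)).isHermitian

lemma lamXY_mul (k : ℕ) {c : ℝ} (hc : 0 ≤ c) (x y : ℝ) :
    lamXY A k (c * x) (c * y) = c * lamXY A k x y := by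
  rw [lamXY, lamXY, ← kthEig_real_smul (isHermitian_smul_ReM_add_smul_ImM A x y) hc]
  push_cast
  rw [smul_add, smul_smul, smul_smul]

lemma lamXY_neg {k : ℕ} (hk1 : 1 ≤ k) (hkn : k ≤ n) (x y : ℝ) :
    lamXY A k (-x) (-y) = -lamXY A (n - k + 1) x y := by
  rw [lamXY, lamXY, ← kthEig_neg (isHermitian_smul_ReM_add_smul_ImM A x y) hk1 hkn]
  push_cast
  rw [neg_add, neg_smul, neg_smul]

lemma re_mul_add_im_mul_le_lamXY {k : ℕ} {z : ℂ} (hz : z ∈ NumRange A k) (x y : ℝ) :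
    z.re * x + z.im * y ≤ lamXY A k x y := by
  set w : ℂ := ⟨x, y⟩
  have hx : ‖w‖ * Real.cos w.arg = x := Complex.norm_mul_cos_arg w
  have hy : ‖w‖ * Real.sin w.arg = y := Complex.norm_mul_sin_arg w
  have h : z.re * Real.cos w.arg + z.im * Real.sin w.arg
      ≤ lamXY A k (Real.cos w.arg) (Real.sin w.arg) := hz w.arg
  rw [← hx, ← hy, lamXY_mul A k (norm_nonneg w)]
  nlinarith [mul_le_mul_of_nonneg_left h (norm_nonneg w)]

lemma pencil_update (v : Fin 3 → ℝ) (i : Fin 3) (s : ℝ) :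
    pencil A (Function.update v i s)
      = pencil A v + ((s - v i : ℝ) : ℂ) • pencil A (Pi.single i 1) := by
  fin_cases i <;> simp [pencil] <;> module

end Pencil

section Kippenhahn

open Polynomial

variable {n : ℕ} {A : Matrix (Fin n) (Fin n) ℂ}

lemma pencil_mul_eigenvectorUnitary_apply {x y : ℝ}
    (hS : ((x : ℂ) • ReM A + (y : ℂ) • ImM A).IsHermitian) (t : ℝ) (r j : Fin n) :
    (pencil A ![t, x, y] * (hS.eigenvectorUnitary : Matrix (Fin n) (Fin n) ℂ)) r j
      = (t + hS.eigenvalues j) * (hS.eigenvectorUnitary : Matrix (Fin n) (Fin n) ℂ) r j := by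
  have h : pencil A ![t, x, y] = (t : ℂ) • 1 + ((x : ℂ) • ReM A + (y : ℂ) • ImM A) := by
    simp [pencil, add_assoc]
  rw [h, Matrix.add_mul, Matrix.smul_mul, Matrix.one_mul, Matrix.add_apply, Matrix.smul_apply,
    Matrix.IsHermitian.mul_eigenvectorUnitary_apply, smul_eq_mul, add_mul]
  rfl

lemma sq_dvd_lineRestrict {fA : MvPolynomial (Fin 3) ℝ}
    (hfA : ∀ v : Fin 3 → ℝ, ((MvPolynomial.eval v fA : ℝ) : ℂ) = (pencil A v).det)
    {v : Fin 3 → ℝ} {V : Matrix (Fin n) (Fin n) ℂ} (hV : IsUnit V.det) {j₁ j₂ : Fin n}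
    (hj : j₁ ≠ j₂) (h₁ : ∀ r, (pencil A v * V) r j₁ = 0) (h₂ : ∀ r, (pencil A v * V) r j₂ = 0)
    (i : Fin 3) : (X - C (v i)) ^ 2 ∣ fA.lineRestrict v i := by
  set a : ℂ := ((v i : ℝ) : ℂ)
  set P : ℂ[X] := ((pencil A v).map C + (X - C a) • (pencil A (Pi.single i 1)).map C).det
  have hP : (X - C a) ^ 2 ∣ P := by
    refine Matrix.sq_dvd_det_add_smul (V := V.map C) ?_ hj (fun r => ?_) (fun r => ?_) _ _
    · rw [← RingHom.mapMatrix_apply, ← RingHom.map_det]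
      exact hV.map C
    · rw [← Matrix.map_mul, Matrix.map_apply, h₁ r, map_zero]
    · rw [← Matrix.map_mul, Matrix.map_apply, h₂ r, map_zero]
  have hPeval : ∀ s : ℝ, P.eval (s : ℂ) = (((fA.lineRestrict v i).eval s : ℝ) : ℂ) := by
    intro s
    rw [MvPolynomial.eval_lineRestrict, hfA, pencil_update, ← coe_evalRingHom, RingHom.map_det]
    congr 1
    ext r c
    simp [a]
  have hmap : (fA.lineRestrict v i).map Complex.ofRealHom = P := by
    refine eq_of_infinite_eval_eq _ _ (Set.infinite_of_injective_forall_mem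
      Complex.ofReal_injective fun s => ?_)
    rw [Set.mem_ofPred_eq, hPeval, eval_map]
    exact eval₂_at_apply _ _
  rw [← map_dvd_map Complex.ofRealHom Complex.ofReal_injective ((monic_X_sub_C _).pow 2)]
  simpa [Polynomial.map_pow, hmap] using hP

end Kippenhahn

open MvPolynomial in
theorem stmt12_general {n k : ℕ} (hk1 : 1 ≤ k) (hkn : k ≤ n)
    (A : Matrix (Fin n) (Fin n) ℂ)
    (fA : MvPolynomial (Fin 3) ℝ)
    (hfA : ∀ v : Fin 3 → ℝ, ((eval v fA : ℝ) : ℂ) = (pencil A v).det)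
    (p₁ p₂ : ℝ)
    (heq : lamXY A k p₁ p₂ = lamXY A (n - k + 1) p₁ p₂) :
    (∀ z ∈ NumRange A k, z.re * p₁ + z.im * p₂ = lamXY A k p₁ p₂) ∧
    ((k : ℝ) < (n + 1) / 2 →
      eval ![-(lamXY A k p₁ p₂), p₁, p₂] fA = 0 ∧
      ∀ i : Fin 3, eval ![-(lamXY A k p₁ p₂), p₁, p₂] (pderiv i fA) = 0) := by
  refine ⟨fun z hz => le_antisymm (re_mul_add_im_mul_le_lamXY A hz p₁ p₂) ?_, fun hk2 => ?_⟩
  · have h := re_mul_add_im_mul_le_lamXY A hz (-p₁) (-p₂)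
    rw [lamXY_neg A hk1 hkn, ← heq] at h
    linarith
  have h2k : 2 * k < n + 1 := by
    rw [lt_div_iff₀ two_pos] at hk2
    exact_mod_cast (by push_cast; linarith : ((2 * k : ℕ) : ℝ) < (n + 1 : ℕ))
  have hS := isHermitian_smul_ReM_add_smul_ImM A p₁ p₂
  obtain ⟨j₁, j₂, hj, hj₁, hj₂⟩ :=
    exists_ne_eigenvalues_eq_kthEig hS hk1 hkn (by omega) (by omega) (by omega) heq
  have hcol : ∀ j, hS.eigenvalues j = lamXY A k p₁ p₂ → ∀ r, (pencil A ![-(lamXY A k p₁ p₂), p₁, p₂]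
      * (hS.eigenvectorUnitary : Matrix (Fin n) (Fin n) ℂ)) r j = 0 := fun j hj r => by
    rw [pencil_mul_eigenvectorUnitary_apply, hj, Complex.ofReal_neg, neg_add_cancel, zero_mul]
  have hdvd := sq_dvd_lineRestrict hfA
    (isUnit_det_of_right_inverse (mem_unitaryGroup_iff.mp hS.eigenvectorUnitary.2)) hj
    (hcol j₁ hj₁) (hcol j₂ hj₂)
  exact ⟨(eval_eq_zero_and_eval_pderiv_eq_zero (hdvd 0)).1,
    fun i => (eval_eq_zero_and_eval_pderiv_eq_zero (hdvd i)).2⟩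

open MvPolynomial in
/-- If `λ_k(p₁,p₂) = λ_{n−k+1}(p₁,p₂)` for some `(p₁,p₂) ≠ (0,0)`,
then (i) `Λ_k(A) ⊆ {a + ib : a p₁ + b p₂ = λ_k(p₁,p₂)}`, and (ii) if `k < (n+1)/2`
then `f_A` and its gradient vanish at `p = (−λ_k(p₁,p₂), p₁, p₂)`. -/
theorem stmt12 {n k : ℕ} (hk1 : 1 ≤ k) (hkn : k ≤ n)
    (A : Matrix (Fin n) (Fin n) ℂ)
    (fA : MvPolynomial (Fin 3) ℝ)
    (hfA : ∀ v : Fin 3 → ℝ, ((eval v fA : ℝ) : ℂ) = (pencil A v).det)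
    (p₁ p₂ : ℝ) (hp : (p₁, p₂) ≠ (0, 0))
    (heq : lamXY A k p₁ p₂ = lamXY A (n - k + 1) p₁ p₂) :
    (∀ z ∈ NumRange A k, z.re * p₁ + z.im * p₂ = lamXY A k p₁ p₂) ∧
    ((k : ℝ) < (n + 1) / 2 →
      eval ![-(lamXY A k p₁ p₂), p₁, p₂] fA = 0 ∧
      ∀ i : Fin 3, eval ![-(lamXY A k p₁ p₂), p₁, p₂] (pderiv i fA) = 0) :=
  stmt12_general hk1 hkn A fA hfA p₁ p₂ heq

end
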